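/- arXiv:2512.10635 — 7 statements merged into one kernel-verified Lean document; each statement's English description precedes it below -/
import Mathlib

section
/- Let N, Δ be positive integers and w = (Δ^0, Δ^1, Δ^2, …, Δ^{N-1}) ∈ Z^N. There is no vector w̄ ∈ Z^N with ‖w̄‖_1 < Δ^{N-1} such that w and w̄ are equivalent on the integer points of [-Δ, Δ]^N. -/
theorem equivalent_vector_lower_bound (N Δ : ℕ) (hN : 0 < N) (hΔ : 0 < Δ)
    (w : Fin N → ℤ) (hw : ∀ i, w i = (Δ : ℤ) ^ (i : ℕ)) :
    ¬ ∃ wbar : Fin N → ℤ, (∑ i, |wbar i|) < (Δ : ℤ) ^ (N - 1) ∧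
      (∀ x y : Fin N → ℤ, (∀ i, |x i| ≤ (Δ : ℤ)) → (∀ i, |y i| ≤ (Δ : ℤ)) →
        ((∑ i, w i * y i) ≤ (∑ i, w i * x i) ↔
         (∑ i, wbar i * y i) ≤ (∑ i, wbar i * x i))) := by
  rintro ⟨wbar, h1, h2⟩
  have hΔ1 : (1:ℤ) ≤ (Δ:ℤ) := by exact_mod_cast hΔ
  set e : Fin N → ℤ → Fin N → ℤ := fun i c j => if j = i then c else 0 with he
  have hsum : ∀ (v : Fin N → ℤ) i c, (∑ j, v j * e i c j) = v i * c := by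
    intro v i c
    simp [he, mul_ite]
  have hsum0 : ∀ (v : Fin N → ℤ), (∑ j, v j * (fun _ => (0:ℤ)) j) = 0 := by
    intro v; simp
  have hbd : ∀ i c, |c| ≤ (Δ:ℤ) → ∀ j, |e i c j| ≤ (Δ:ℤ) := by
    intro i c hc j
    by_cases h : j = i <;> simp [he, h] <;> linarith [abs_nonneg c]
  have hbd0 : ∀ j : Fin N, |(fun _ => (0:ℤ)) j| ≤ (Δ:ℤ) := by
    intro j; simp
  have h1le : |(1:ℤ)| ≤ (Δ:ℤ) := by simpa using hΔ1
  have hΔle : |(Δ:ℤ)| ≤ (Δ:ℤ) := by rw [abs_of_nonneg (by linarith)]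
  set i0 : Fin N := ⟨0, hN⟩ with hi0
  have hw0 : w i0 = 1 := by simp [hw, hi0]
  -- Step A: wbar i0 ≥ 1
  have hApos : 1 ≤ wbar i0 := by
    have hA := h2 (e i0 1) (fun _ => 0) (hbd i0 1 h1le) hbd0
    have hB := h2 (fun _ => 0) (e i0 1) hbd0 (hbd i0 1 h1le)
    rw [hsum, hsum0, hsum, hsum0, hw0] at hA
    rw [hsum, hsum0, hsum, hsum0, hw0] at hB
    have hA' : 0 ≤ wbar i0 * 1 := hA.mp (by norm_num)
    have hB' : ¬ (wbar i0 * 1 ≤ 0) := fun h => by linarith [hB.mpr h]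
    omega
  -- Step B: wbar_{k+1} = Δ * wbar_k
  have hstep : ∀ (k : ℕ) (h : k + 1 < N),
      wbar ⟨k+1, h⟩ = (Δ:ℤ) * wbar ⟨k, by omega⟩ := by
    intro k h
    set a : Fin N := ⟨k, by omega⟩
    set b : Fin N := ⟨k+1, h⟩
    have hwa : w a = (Δ:ℤ) ^ k := by simp [hw, a]
    have hwb : w b = (Δ:ℤ) ^ (k+1) := by simp [hw, b]
    have hA := h2 (e a (Δ:ℤ)) (e b 1) (hbd a _ hΔle) (hbd b 1 h1le)
    have hB := h2 (e b 1) (e a (Δ:ℤ)) (hbd b 1 h1le) (hbd a _ hΔle)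
    rw [hsum, hsum, hsum, hsum, hwa, hwb] at hA
    rw [hsum, hsum, hsum, hsum, hwa, hwb] at hB
    have hA' : wbar b * 1 ≤ wbar a * (Δ:ℤ) := hA.mp (le_of_eq (by ring))
    have hB' : wbar a * (Δ:ℤ) ≤ wbar b * 1 := hB.mp (le_of_eq (by ring))
    have : wbar b * 1 = wbar a * (Δ:ℤ) := le_antisymm hA' hB'
    linarith [this]
  -- Step C: wbar_k ≥ Δ^k
  have hlow : ∀ (k : ℕ) (h : k < N), (Δ:ℤ) ^ k ≤ wbar ⟨k, h⟩ := by
    intro k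
    induction k with
    | zero => intro h; simpa using hApos
    | succ n ih =>
      intro h
      have hn : n < N := by omega
      have := hstep n h
      rw [this]
      calc (Δ:ℤ) ^ (n+1) = (Δ:ℤ) * (Δ:ℤ) ^ n := by ring
        _ ≤ (Δ:ℤ) * wbar ⟨n, hn⟩ :=
          mul_le_mul_of_nonneg_left (ih hn) (by linarith)
  -- Final contradiction
  have hL : N - 1 < N := by omega
  have hlast := hlow (N-1) hL
  have habs : wbar ⟨N-1, hL⟩ ≤ |wbar ⟨N-1, hL⟩| := le_abs_self _
  have hsumge : |wbar ⟨N-1, hL⟩| ≤ ∑ i, |wbar i| :=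
    Finset.single_le_sum (f := fun i => |wbar i|) (fun i _ => abs_nonneg _)
      (Finset.mem_univ _)
  linarith
end

section
/- For every w ∈ R^N and every positive integer Δ, there exists a vector w̄ ∈ Z^N with ‖w̄‖_1 ≤ N^2·(2√N·Δ)^{N-1} such that w and w̄ are equivalent on the integer points of [-Δ, Δ]^N, i.e., for all integer vectors x, y with ‖x‖_∞, ‖y‖_∞ ≤ Δ: w^T x ≥ w^T y ⟺ w̄^T x ≥ w̄^T y. -/
/-!
As `x - y` ranges over the integer box `[-2Δ, 2Δ]^N`, it suffices that `w̄ ⬝ᵥ d` has the sign of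
`w ⬝ᵥ d` for every `d` in that box. The functionals `g` with `g d = 0` where `w ⬝ᵥ d = 0` and
`g d ≥ 1` where `w ⬝ᵥ d > 0` form a polyhedron containing a multiple of `w`. At a vertex, `N`
linearly independent box vectors `d_k` satisfy `g d_k = β_k ∈ {0, 1}`, so by Cramer's rule
`|det d| • g` is the dot product with the integer vector `w̄ = ±cramer d β`. Its coordinates are
determinants with one column in `{0, 1}^N` and the others bounded by `2Δ`, which Hadamard's
inequality bounds by `√N (2√N Δ)^(N-1)`.
-/

open Finset Module Matrix

theorem Matrix.abs_det_le_prod_sqrt_sum_sq {n : ℕ} (M : Matrix (Fin n) (Fin n) ℝ) :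
    |M.det| ≤ ∏ j, √(∑ i, M i j ^ 2) := by
  have : Fact (finrank ℝ (EuclideanSpace ℝ (Fin n)) = n) := ⟨finrank_euclideanSpace_fin⟩
  let b := EuclideanSpace.basisFun (Fin n) ℝ
  let col : Fin n → EuclideanSpace ℝ (Fin n) := fun j => WithLp.toLp 2 fun i => M i j
  have hdet : b.toBasis.det col = M.det := by
    rw [Basis.det_apply]
    rfl
  rw [← hdet, ← b.toBasis.orientation.volumeForm_robust' b]
  refine (Orientation.abs_volumeForm_apply_le _ col).trans_eq ?_
  simp [EuclideanSpace.norm_eq, col]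

theorem Matrix.abs_det_le_prod_of_abs_le {n : ℕ} (M : Matrix (Fin n) (Fin n) ℝ)
    (c : Fin n → ℝ) (h : ∀ i j, |M i j| ≤ c j) : |M.det| ≤ ∏ j, √n * c j := by
  refine M.abs_det_le_prod_sqrt_sum_sq.trans
    (prod_le_prod (fun j _ => Real.sqrt_nonneg _) fun j _ => ?_)
  have hc : 0 ≤ c j := (abs_nonneg _).trans (h j j)
  calc √(∑ i, M i j ^ 2) ≤ √(∑ _i : Fin n, c j ^ 2) :=
        Real.sqrt_le_sqrt <| sum_le_sum fun i _ =>
          sq_le_sq' (abs_le.1 (h i j)).1 (abs_le.1 (h i j)).2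
    _ = √n * c j := by simp [Real.sqrt_mul (Nat.cast_nonneg n), Real.sqrt_sq hc]

theorem Matrix.abs_det_updateCol_le {n : ℕ} (A : Matrix (Fin n) (Fin n) ℝ) (b : Fin n → ℝ)
    {a : ℝ} (hA : ∀ i j, |A i j| ≤ a) (hb : ∀ i, |b i| ≤ 1) (j : Fin n) :
    |(A.updateCol j b).det| ≤ √n * (√n * a) ^ (n - 1) := by
  refine ((A.updateCol j b).abs_det_le_prod_of_abs_le (fun k => if k = j then 1 else a)
    fun i k => ?_).trans_eq ?_
  · by_cases hk : k = j
    · subst hk; simpa using hb i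
    · simpa [hk] using hA i k
  · rw [← mul_prod_erase univ _ (mem_univ j), if_pos rfl, mul_one,
      prod_congr rfl fun k hk => by rw [if_neg (ne_of_mem_erase hk)], prod_const,
      card_erase_of_mem (mem_univ j), card_univ, Fintype.card_fin]

section Polyhedron

variable {𝕜 E ι : Type*} [Field 𝕜] [LinearOrder 𝕜] [IsStrictOrderedRing 𝕜]
  [AddCommGroup E] [Module 𝕜 E] (φ : ι → E) (Z P : Finset ι)

def IsFeasible (g : Dual 𝕜 E) : Prop :=
  (∀ i ∈ Z, g (φ i) = 0) ∧ ∀ i ∈ P, 1 ≤ g (φ i)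

def tightSet (g : Dual 𝕜 E) : Set ι :=
  {i | i ∈ Z ∨ i ∈ P ∧ g (φ i) = 1}

variable {φ Z P}

theorem exists_isFeasible_smul {g : Dual 𝕜 E} (hZ : ∀ i ∈ Z, g (φ i) = 0)
    (hP : ∀ i ∈ P, 0 < g (φ i)) : ∃ c : 𝕜, IsFeasible φ Z P (c • g) := by
  obtain ⟨c, hc⟩ := (P.image fun i => (g (φ i))⁻¹).exists_le
  refine ⟨c, fun i hi => by simp [hZ i hi], fun i hi => ?_⟩
  calc (1 : 𝕜) = (g (φ i))⁻¹ * g (φ i) := (inv_mul_cancel₀ (hP i hi).ne').symm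
    _ ≤ c * g (φ i) := mul_le_mul_of_nonneg_right (hc _ (mem_image_of_mem _ hi)) (hP i hi).le

theorem IsFeasible.exists_card_slack_lt {g : Dual 𝕜 E} (hg : IsFeasible φ Z P g) {i₀ : ι}
    (hi₀ : i₀ ∈ P) (hspan : φ i₀ ∉ Submodule.span 𝕜 (φ '' tightSet φ Z P g)) :
    ∃ g' : Dual 𝕜 E, IsFeasible φ Z P g' ∧
      #{i ∈ P | g' (φ i) ≠ 1} < #{i ∈ P | g (φ i) ≠ 1} := by
  obtain ⟨f, hf₀, hf_tight⟩ :
      ∃ f : Dual 𝕜 E, f (φ i₀) < 0 ∧ ∀ i ∈ tightSet φ Z P g, f (φ i) = 0 := by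
    obtain ⟨f, hf₀, hker⟩ := Submodule.exists_le_ker_of_notMem hspan
    have hf : ∀ i ∈ tightSet φ Z P g, f (φ i) = 0 := fun i hi =>
      hker (Submodule.subset_span (Set.mem_image_of_mem φ hi))
    rcases hf₀.lt_or_gt with h | h
    · exact ⟨f, h, hf⟩
    · exact ⟨-f, by simpa using h, fun i hi => by simp [hf i hi]⟩
  have hP_tight : ∀ i ∈ P, g (φ i) = 1 → i ∈ tightSet φ Z P g :=
    fun i hi h => Or.inr ⟨hi, h⟩
  -- move from `g` along `f` until the first constraint with `f < 0` becomes tight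
  set ratio : ι → 𝕜 := fun i => (g (φ i) - 1) / -f (φ i)
  have hne : {i ∈ P | f (φ i) < 0}.Nonempty := ⟨i₀, mem_filter.2 ⟨hi₀, hf₀⟩⟩
  set t := {i ∈ P | f (φ i) < 0}.inf' hne ratio
  have ht : 0 ≤ t := le_inf' _ _ fun i hi => by
    obtain ⟨hP, hneg⟩ := mem_filter.1 hi
    exact div_nonneg (sub_nonneg.2 (hg.2 i hP)) (neg_nonneg.2 hneg.le)
  obtain ⟨m, hm, hmt⟩ : ∃ m ∈ {i ∈ P | f (φ i) < 0}, t = (g (φ m) - 1) / -f (φ m) :=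
    exists_mem_eq_inf' hne ratio
  obtain ⟨hmP, hmneg⟩ := mem_filter.1 hm
  have hg_apply : ∀ i, (g + t • f) (φ i) = g (φ i) + t * f (φ i) := fun i => by simp
  refine ⟨g + t • f, ⟨fun i hi => ?_, fun i hi => ?_⟩, card_lt_card ?_⟩
  · simp [hg.1 i hi, hf_tight i (Or.inl hi)]
  · rw [hg_apply]
    rcases le_or_gt 0 (f (φ i)) with hpos | hneg
    · linarith [hg.2 i hi, mul_nonneg ht hpos]
    · have h : t ≤ (g (φ i) - 1) / -f (φ i) := inf'_le ratio (mem_filter.2 ⟨hi, hneg⟩)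
      rw [le_div_iff₀ (neg_pos.2 hneg)] at h
      linarith
  · refine (ssubset_iff_of_subset fun i hi => ?_).2 ⟨m, ?_, ?_⟩
    · obtain ⟨hP, h⟩ := mem_filter.1 hi
      refine mem_filter.2 ⟨hP, fun h1 => h ?_⟩
      rw [hg_apply, hf_tight i (hP_tight i hP h1), h1, mul_zero, add_zero]
    · refine mem_filter.2 ⟨hmP, fun h1 => hmneg.ne (hf_tight m (hP_tight m hmP h1))⟩
    · refine fun h => (mem_filter.1 h).2 ?_
      rw [hg_apply, hmt]
      field_simp [hmneg.ne]
      ring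

theorem IsFeasible.exists_span_tightSet {g : Dual 𝕜 E} (hg : IsFeasible φ Z P g) :
    ∃ g' : Dual 𝕜 E, IsFeasible φ Z P g' ∧
      ∀ i ∈ P, φ i ∈ Submodule.span 𝕜 (φ '' tightSet φ Z P g') := by
  obtain ⟨g', hg', hmin⟩ := (InvImage.wf (fun g : Dual 𝕜 E => #{i ∈ P | g (φ i) ≠ 1})
    wellFounded_lt).has_min {g | IsFeasible φ Z P g} ⟨g, hg⟩
  refine ⟨g', hg', fun i hi => by_contra fun hspan => ?_⟩
  obtain ⟨g'', hg'', hlt⟩ := hg'.exists_card_slack_lt hi hspan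
  exact hmin g'' hg'' hlt

end Polyhedron

theorem exists_linearIndependent_fin_of_span_eq_top {K V ι : Type*} [DivisionRing K]
    [AddCommGroup V] [Module K V] [FiniteDimensional K V] {n : ℕ} (hn : finrank K V = n)
    (v : ι → V) {s : Set ι} (hs : Submodule.span K (v '' s) = ⊤) :
    ∃ r : Fin n → ι, (∀ k, r k ∈ s) ∧ LinearIndependent K (v ∘ r) := by
  obtain ⟨κ, a, -, hspan, hli⟩ := exists_linearIndependent' K fun i : s => v i
  rw [← Set.image_eq_range, hs] at hspan
  let e : Fin n ≃ κ := (finBasisOfFinrankEq K V hn).indexEquiv (Basis.mk hli hspan.ge)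
  exact ⟨fun k => a (e k), fun k => (a (e k)).2, hli.comp e e.injective⟩

section IntegerPoints

variable {n : ℕ}

def castVec (n : ℕ) : (Fin n → ℤ) →+* (Fin n → ℝ) :=
  (Int.castRingHom ℝ).compLeft (Fin n)

@[simp]
theorem castVec_apply (d : Fin n → ℤ) (i : Fin n) : castVec n d i = d i := rfl

theorem castVec_dotProduct (v d : Fin n → ℤ) :
    castVec n v ⬝ᵥ castVec n d = ((v ⬝ᵥ d : ℤ) : ℝ) := by
  simp [dotProduct]

noncomputable def intBox (n : ℕ) (R : ℤ) : Finset (Fin n → ℤ) :=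
  Icc (fun _ => -R) fun _ => R

theorem mem_intBox {R : ℤ} {d : Fin n → ℤ} : d ∈ intBox n R ↔ ∀ i, |d i| ≤ R := by
  simp [intBox, Pi.le_def, abs_le, forall_and]

noncomputable def kerPoints (w : Fin n → ℝ) (R : ℤ) : Finset (Fin n → ℤ) :=
  {d ∈ intBox n R | w ⬝ᵥ castVec n d = 0}

noncomputable def posPoints (w : Fin n → ℝ) (R : ℤ) : Finset (Fin n → ℤ) :=
  {d ∈ intBox n R | 0 < w ⬝ᵥ castVec n d}

theorem IsFeasible.nonneg_iff {w : Fin n → ℝ} {R : ℤ} {g : Dual ℝ (Fin n → ℝ)}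
    (hg : IsFeasible (castVec n) (kerPoints w R) (posPoints w R) g) {d : Fin n → ℤ}
    (hd : d ∈ intBox n R) : 0 ≤ w ⬝ᵥ castVec n d ↔ 0 ≤ g (castVec n d) := by
  rcases lt_trichotomy (w ⬝ᵥ castVec n d) 0 with h | h | h
  · have h1 := hg.2 (-d) (mem_filter.2 ⟨by simpa [mem_intBox] using hd, by simpa using h⟩)
    rw [map_neg, map_neg] at h1
    constructor <;> intro <;> linarith
  · simp [h, hg.1 d (mem_filter.2 ⟨hd, h⟩)]
  · have h1 := hg.2 d (mem_filter.2 ⟨hd, h⟩)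
    constructor <;> intro <;> linarith

theorem span_tightSet_eq_top {w : Fin n → ℝ} {R : ℤ} (hR : 1 ≤ R) {g : Dual ℝ (Fin n → ℝ)}
    (hspan : ∀ d ∈ posPoints w R, castVec n d ∈ Submodule.span ℝ
      (castVec n '' tightSet (castVec n) (kerPoints w R) (posPoints w R) g)) :
    Submodule.span ℝ
      (castVec n '' tightSet (castVec n) (kerPoints w R) (posPoints w R) g) = ⊤ := by
  rw [eq_top_iff, ← (Pi.basisFun ℝ (Fin n)).span_eq, Submodule.span_le]
  rintro _ ⟨j, rfl⟩
  have he : castVec n (Pi.single j 1) = Pi.basisFun ℝ (Fin n) j := by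
    ext i; simp [Pi.single_apply]
  have hbox : ∀ s : ℤ, |s| ≤ 1 → s • Pi.single j 1 ∈ intBox n R := fun s hs =>
    mem_intBox.2 fun i => by by_cases hij : i = j <;> simp [hij] <;> linarith
  rw [SetLike.mem_coe, ← he]
  rcases lt_trichotomy (w ⬝ᵥ castVec n (Pi.single j 1)) 0 with h | h | h
  · rw [← neg_mem_iff, ← map_neg]
    exact hspan _ (mem_filter.2 ⟨by simpa using hbox (-1) (by simp), by simpa using h⟩)
  · exact Submodule.subset_span
      ⟨_, Or.inl (mem_filter.2 ⟨by simpa using hbox 1 (by simp), h⟩), rfl⟩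
  · exact hspan _ (mem_filter.2 ⟨by simpa using hbox 1 (by simp), h⟩)

theorem Matrix.mulVec_sign_smul_cramer {m : Type*} [Fintype m] [DecidableEq m] (A : Matrix m m ℤ)
    (b : m → ℤ) : A *ᵥ (A.det.sign • A.cramer b) = |A.det| • b := by
  rw [Matrix.mulVec_smul, Matrix.mulVec_cramer, smul_smul, Int.sign_mul_self_eq_abs]

theorem det_ne_zero_of_linearIndependent_castVec {r : Fin n → Fin n → ℤ}
    (hli : LinearIndependent ℝ (castVec n ∘ r)) : (Matrix.of r).det ≠ 0 := by
  have hunit : IsUnit ((Matrix.of r).map ((↑) : ℤ → ℝ)) :=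
    Matrix.linearIndependent_rows_iff_isUnit.1 hli
  rw [Matrix.isUnit_iff_isUnit_det, ← Int.cast_det, isUnit_iff_ne_zero] at hunit
  exact_mod_cast hunit

theorem castVec_sign_smul_cramer_dotProduct {g : Dual ℝ (Fin n → ℝ)} {r : Fin n → Fin n → ℤ}
    (hli : LinearIndependent ℝ (castVec n ∘ r)) {b : Fin n → ℤ}
    (hb : ∀ k, g (castVec n (r k)) = b k) (x : Fin n → ℝ) :
    castVec n ((Matrix.of r).det.sign • (Matrix.of r).cramer b) ⬝ᵥ x =
      |((Matrix.of r).det : ℝ)| * g x := by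
  set A : Matrix (Fin n) (Fin n) ℤ := Matrix.of r
  have hrow : ∀ k, castVec n (A.det.sign • A.cramer b) ⬝ᵥ castVec n (r k) =
      (|(A.det : ℝ)| • g) (castVec n (r k)) := by
    intro k
    rw [castVec_dotProduct, dotProduct_comm, LinearMap.smul_apply, hb, smul_eq_mul]
    have := congrFun (A.mulVec_sign_smul_cramer b) k
    simp only [Pi.smul_apply, smul_eq_mul] at this
    exact_mod_cast this
  have := LinearMap.ext_on_range (hli.span_eq_top_of_card_eq_finrank' (by simp))
    (f := dotProductEquiv ℝ (Fin n) (castVec n (A.det.sign • A.cramer b)))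
    (g := |(A.det : ℝ)| • g) hrow
  exact LinearMap.congr_fun this x

theorem abs_castVec_sign_smul_cramer_le (A : Matrix (Fin n) (Fin n) ℤ) {b : Fin n → ℤ}
    {a : ℤ} (hA : ∀ i j, |A i j| ≤ a) (hb : ∀ i, |b i| ≤ 1) (i : Fin n) :
    |castVec n (A.det.sign • A.cramer b) i| ≤ √n * (√n * a) ^ (n - 1) := by
  have hsign : |(A.det.sign : ℝ)| ≤ 1 := by
    rcases Int.sign_trichotomy A.det with h | h | h <;> simp [h]
  have hcramer : |(A.cramer b i : ℝ)| ≤ √n * (√n * a) ^ (n - 1) := by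
    rw [Matrix.cramer_apply, Int.cast_det, Matrix.map_updateCol]
    exact (A.map _).abs_det_updateCol_le _
      (fun i j => by simp only [map_apply]; exact_mod_cast hA i j)
      (fun i => by simp only [Function.comp_apply]; exact_mod_cast hb i) i
  simp only [castVec_apply, Pi.smul_apply, smul_eq_mul, Int.cast_mul, abs_mul]
  exact (mul_le_of_le_one_left (abs_nonneg _) hsign).trans hcramer

end IntegerPoints

theorem coefficient_reduction (N Δ : ℕ) (hΔ : 0 < Δ) (w : Fin N → ℝ) :
    ∃ wbar : Fin N → ℤ,
      (∑ i, |(wbar i : ℝ)|) ≤ (N : ℝ) ^ 2 * (2 * Real.sqrt N * Δ) ^ (N - 1) ∧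
      ∀ x y : Fin N → ℤ, (∀ i, |x i| ≤ (Δ : ℤ)) → (∀ i, |y i| ≤ (Δ : ℤ)) →
        ((∑ i, w i * (y i : ℝ)) ≤ (∑ i, w i * (x i : ℝ)) ↔
         (∑ i, (wbar i : ℝ) * (y i : ℝ)) ≤ (∑ i, (wbar i : ℝ) * (x i : ℝ))) := by
  set R : ℤ := 2 * Δ
  obtain ⟨c, hc⟩ := exists_isFeasible_smul (φ := castVec N) (Z := kerPoints w R)
    (P := posPoints w R) (g := dotProductEquiv ℝ (Fin N) w) (fun d hd => (mem_filter.1 hd).2)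
    (fun d hd => (mem_filter.1 hd).2)
  obtain ⟨g, hg, hspan⟩ := hc.exists_span_tightSet
  obtain ⟨r, hr, hli⟩ := exists_linearIndependent_fin_of_span_eq_top (finrank_fin_fun ℝ)
    (castVec N) (span_tightSet_eq_top (by omega) hspan)
  have hr_box : ∀ k j, |r k j| ≤ R := fun k j => by
    rcases hr k with hZ | ⟨hP, -⟩
    exacts [mem_intBox.1 (mem_filter.1 hZ).1 j, mem_intBox.1 (mem_filter.1 hP).1 j]
  have hb : ∀ k, ∃ b : ℤ, |b| ≤ 1 ∧ g (castVec N (r k)) = b := fun k => by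
    rcases hr k with hZ | ⟨-, h1⟩
    · exact ⟨0, by simp, by simp [hg.1 _ hZ]⟩
    · exact ⟨1, by simp, by simp [h1]⟩
  choose b hb_abs hb using hb
  set A : Matrix (Fin N) (Fin N) ℤ := Matrix.of r
  have hdet : 0 < |(A.det : ℝ)| :=
    abs_pos.2 (Int.cast_ne_zero.2 (det_ne_zero_of_linearIndependent_castVec hli))
  refine ⟨A.det.sign • A.cramer b, ?_, fun x y hx hy => ?_⟩
  · have hsqrt : √N ≤ N :=
      (Real.sqrt_le_left (Nat.cast_nonneg N)).2 (by exact_mod_cast Nat.le_self_pow two_ne_zero N)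
    calc ∑ i, |castVec N (A.det.sign • A.cramer b) i|
        ≤ ∑ _i : Fin N, √N * (√N * R) ^ (N - 1) :=
          sum_le_sum fun i _ => abs_castVec_sign_smul_cramer_le A hr_box hb_abs i
      _ = N * √N * (2 * √N * Δ) ^ (N - 1) := by simp [R, mul_assoc, mul_left_comm]
      _ ≤ N ^ 2 * (2 * √N * Δ) ^ (N - 1) := by rw [sq]; gcongr
  · have hxy : x - y ∈ intBox N R := mem_intBox.2 fun i =>
      (abs_sub _ _).trans (by have := hx i; have := hy i; omega)
    have key := (hg.nonneg_iff hxy).trans (mul_nonneg_iff_of_pos_left hdet).symm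
    rwa [← castVec_sign_smul_cramer_dotProduct hli hb, map_sub, dotProduct_sub, dotProduct_sub,
      sub_nonneg, sub_nonneg] at key
end

section
/- Fix w ∈ R^N and Δ ∈ N, and let C := ⋂ { x ∈ R^N | (u - v)^T x ≥ 0 } where the intersection ranges over all pairs of integer vectors u, v with ‖u‖_∞, ‖v‖_∞ ≤ Δ and w^T u ≥ w^T v. Then w ∈ C, and every point z in the relative interior of C is equivalent to w on the integer points of [-Δ, Δ]^N, i.e., for all integer x, y with ‖x‖_∞, ‖y‖_∞ ≤ Δ: w^T x ≥ w^T y ⟺ z^T x ≥ z^T y. -/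
lemma aux_extend {E : Type*} [NormedAddCommGroup E] [NormedSpace ℝ E] {C : Set E} {z w : E}
    (hz : z ∈ intrinsicInterior ℝ C) (hw : w ∈ C) : ∃ t : ℝ, 0 < t ∧ z + t • (z - w) ∈ C := by
  rw [intrinsicInterior] at hz
  obtain ⟨p, hp, rfl⟩ := hz
  obtain ⟨U, hUsub, hUo, hpU⟩ := mem_interior.mp hp
  obtain ⟨V, hVo, rfl⟩ := isOpen_induced_iff.mp hUo
  have hcont : Continuous (fun t : ℝ => (p : E) + t • ((p : E) - w)) := by fun_prop
  have h0 : (0 : ℝ) ∈ (fun t : ℝ => (p : E) + t • ((p : E) - w)) ⁻¹' V := by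
    simp only [Set.mem_preimage, zero_smul, add_zero]
    exact hpU
  obtain ⟨ε, hε, hball⟩ := Metric.isOpen_iff.mp (hVo.preimage hcont) 0 h0
  refine ⟨ε/2, by positivity, ?_⟩
  have hmem : (p : E) + (ε/2) • ((p : E) - w) ∈ affineSpan ℝ C := by
    have hws : w ∈ affineSpan ℝ C := subset_affineSpan ℝ C hw
    have hd : (ε/2) • ((p : E) - w) ∈ (affineSpan ℝ C).direction :=
      Submodule.smul_mem _ _ (AffineSubspace.vsub_mem_direction p.2 hws)
    have := AffineSubspace.vadd_mem_of_mem_direction hd p.2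
    simpa [vadd_eq_add, add_comm] using this
  have hV : (p : E) + (ε/2) • ((p : E) - w) ∈ V := by
    apply hball
    simp only [Metric.mem_ball, Real.dist_eq, sub_zero]
    rw [abs_of_pos (by positivity)]
    linarith
  exact hUsub (show (⟨_, hmem⟩ : affineSpan ℝ C) ∈ Subtype.val ⁻¹' V from hV)

theorem relative_interior_points_equivalent (N Δ : ℕ) (w : Fin N → ℝ)
    (C : Set (Fin N → ℝ))
    (hC : C = {x | ∀ u v : Fin N → ℤ, (∀ i, |u i| ≤ (Δ : ℤ)) → (∀ i, |v i| ≤ (Δ : ℤ)) →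
      (∑ i, w i * (v i : ℝ)) ≤ (∑ i, w i * (u i : ℝ)) →
      0 ≤ ∑ i, ((u i : ℝ) - (v i : ℝ)) * x i}) :
    w ∈ C ∧ ∀ z ∈ intrinsicInterior ℝ C,
      ∀ x y : Fin N → ℤ, (∀ i, |x i| ≤ (Δ : ℤ)) → (∀ i, |y i| ≤ (Δ : ℤ)) →
        ((∑ i, w i * (y i : ℝ)) ≤ (∑ i, w i * (x i : ℝ)) ↔
         (∑ i, z i * (y i : ℝ)) ≤ (∑ i, z i * (x i : ℝ))) := by
  have hwC : w ∈ C := by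
    rw [hC]
    intro u v hu hv h
    have : ∑ i, ((u i : ℝ) - (v i : ℝ)) * w i
        = (∑ i, w i * (u i : ℝ)) - ∑ i, w i * (v i : ℝ) := by
      rw [← Finset.sum_sub_distrib]
      exact Finset.sum_congr rfl fun i _ => by ring
    rw [this]
    linarith
  refine ⟨hwC, ?_⟩
  intro z hz x y hx hy
  have hzC : z ∈ C := intrinsicInterior_subset hz
  constructor
  · intro h
    have h0 := (hC ▸ hzC) x y hx hy h
    have : ∑ i, ((x i : ℝ) - (y i : ℝ)) * z i
        = (∑ i, z i * (x i : ℝ)) - ∑ i, z i * (y i : ℝ) := by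
      rw [← Finset.sum_sub_distrib]
      exact Finset.sum_congr rfl fun i _ => by ring
    rw [this] at h0
    linarith
  · intro hzyx
    by_contra hw
    push_neg at hw
    obtain ⟨t, ht, hc⟩ := aux_extend hz hwC
    have h0 := (hC ▸ hc) y x hy hx (le_of_lt hw)
    have hexp : ∑ i, ((y i : ℝ) - (x i : ℝ)) * (z + t • (z - w)) i
        = (1 + t) * ((∑ i, z i * (y i : ℝ)) - ∑ i, z i * (x i : ℝ))
          - t * ((∑ i, w i * (y i : ℝ)) - ∑ i, w i * (x i : ℝ)) := by
      simp only [Pi.add_apply, Pi.smul_apply, Pi.sub_apply, smul_eq_mul,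
        Finset.mul_sum, ← Finset.sum_sub_distrib]
      exact Finset.sum_congr rfl fun i _ => by ring
    rw [hexp] at h0
    nlinarith
end

section
/- For every w ∈ R^{N+1} encoding a Knapsack constraint and Δ = 1, the equivalent vector w̄ from the coefficient-reduction theorem satisfies ‖w̄‖_∞ ≤ ‖w̄‖_1 ≤ (N+1)^2·(2√(N+1))^N, and hence its binary encoding length is O(N log N). Consequently, a Knapsack instance with n items admits an equivalent instance (same solution set of item subsets) of total encoding size O(n^2 log n). -/
/-!
Encode the capacity constraint by its threshold behaviour: the integer vectors `(w', C')` with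
`∑_{i∈s} w'ᵢ ≤ C'` for the feasible subsets `s` and `∑_{i∈s} w'ᵢ ≥ C' + 1` for the infeasible ones
form a nonempty polyhedron with `0, ±1` coefficients and right-hand sides `0, 1`. A point of this
polyhedron whose tight constraints have maximal cardinality can be replaced by any solution of
those tight equations, and a nonsingular square subsystem of them (completed by unit vectors)
is solved by Cramer's rule. Multiplying by the determinant gives an integer point whose
coordinates are bounded, via Hadamard's inequality, by `(n + 1) · √(n + 1) ^ (n + 1)`.
The profit constraint is handled in the same way after a change of sign.
-/

open Module Matrix Set Submodule

theorem Int.cast_dotProduct {R m : Type*} [CommRing R] [Fintype m] (v w : m → ℤ) :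
    ((v ⬝ᵥ w : ℤ) : R) = (fun j => (v j : R)) ⬝ᵥ fun j => (w j : R) :=
  (Int.castRingHom R).map_dotProduct v w

theorem dotProduct_eq_zero_of_mem_span {R m : Type*} [CommSemiring R] [Fintype m]
    {S : Set (m → R)} {z : m → R} (hS : ∀ v ∈ S, v ⬝ᵥ z = 0) {v : m → R} (hv : v ∈ span R S) :
    v ⬝ᵥ z = 0 := by
  induction hv using span_induction with
  | mem v hv => exact hS v hv
  | zero => exact zero_dotProduct z
  | add v w _ _ hv hw => rw [add_dotProduct, hv, hw, add_zero]
  | smul a v _ hv => rw [smul_dotProduct, hv, smul_zero]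

theorem Matrix.abs_det_le_prod_norm_rows {N : ℕ} (A : Matrix (Fin N) (Fin N) ℝ) :
    |A.det| ≤ ∏ i, ‖(WithLp.toLp 2 (A i) : EuclideanSpace ℝ (Fin N))‖ := by
  have : Fact (finrank ℝ (EuclideanSpace ℝ (Fin N)) = N) := ⟨finrank_euclideanSpace_fin⟩
  let b := EuclideanSpace.basisFun (Fin N) ℝ
  have hdet : b.toBasis.det (fun i => WithLp.toLp 2 (A i)) = A.det := by
    rw [Basis.det_apply, ← det_transpose]
    rfl
  rw [← hdet, ← b.toBasis.orientation.volumeForm_robust' b]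
  exact b.toBasis.orientation.abs_volumeForm_apply_le _

theorem Matrix.abs_det_le_sqrt_pow {N : ℕ} (A : Matrix (Fin N) (Fin N) ℝ)
    (hA : ∀ i j, |A i j| ≤ 1) : |A.det| ≤ √N ^ N := by
  refine A.abs_det_le_prod_norm_rows.trans ?_
  calc ∏ i, ‖(WithLp.toLp 2 (A i) : EuclideanSpace ℝ (Fin N))‖ ≤ ∏ _i : Fin N, √N := by
        refine Finset.prod_le_prod (fun _ _ => norm_nonneg _) fun i _ => ?_
        rw [EuclideanSpace.norm_eq]
        refine Real.sqrt_le_sqrt ?_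
        calc ∑ j, ‖A i j‖ ^ 2 ≤ ∑ _j : Fin N, (1 : ℝ) :=
              Finset.sum_le_sum fun j _ => pow_le_one₀ (norm_nonneg _) (hA i j)
          _ = N := by simp
    _ = √N ^ N := by simp

theorem Matrix.abs_adjugate_mulVec_le {N : ℕ} (A : Matrix (Fin N) (Fin N) ℤ)
    (hA : ∀ i j, |A i j| ≤ 1) (c : Fin N → ℤ) (hc : ∀ i, |c i| ≤ 1) (j : Fin N) :
    |((A.adjugate *ᵥ c) j : ℝ)| ≤ N * √N ^ N := by
  have hadj : ∀ k, |(A.adjugate j k : ℝ)| ≤ √N ^ N := by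
    intro k
    rw [adjugate_apply, Int.cast_det]
    refine abs_det_le_sqrt_pow _ fun i l => ?_
    suffices |A.updateRow k (Pi.single j 1) i l| ≤ 1 by simpa using (Int.cast_le (R := ℝ)).2 this
    rcases eq_or_ne i k with rfl | hik
    · rw [updateRow_self, Pi.single_apply]
      split_ifs <;> simp
    · rw [updateRow_ne hik]
      exact hA i l
  calc |((A.adjugate *ᵥ c) j : ℝ)| = |∑ k, (A.adjugate j k : ℝ) * c k| := by
        simp [mulVec, dotProduct]
    _ ≤ ∑ k, |(A.adjugate j k : ℝ) * c k| := Finset.abs_sum_le_sum_abs _ _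
    _ ≤ ∑ _k : Fin N, √N ^ N * 1 := by
        gcongr with k
        rw [abs_mul]
        exact mul_le_mul (hadj k) (by exact_mod_cast hc k) (abs_nonneg _)
          ((abs_nonneg _).trans (hadj k))
    _ = N * √N ^ N := by simp

theorem exists_linearIndependent_sumElim_comp {K V ι κ : Type*} [Field K] [AddCommGroup V]
    [Module K V] [FiniteDimensional K V] {m : ℕ} (hm : finrank K V = m) (u : ι → V) (w : κ → V)
    (hw : span K (range w) = ⊤) :
    ∃ f : Fin m → ι ⊕ κ, LinearIndependent K (Sum.elim u w ∘ f) ∧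
      ∀ i, u i ∈ span K (u '' {i' | Sum.inl i' ∈ range f}) := by
  set v := Sum.elim u w
  obtain ⟨B, hBinl, -, hBspan, hBli⟩ :=
    exists_linearIndepOn_extension (linearIndepOn_empty K v) (empty_subset (range Sum.inl))
  obtain ⟨b, -, hBb, hbspan, hbli⟩ := exists_linearIndepOn_extension hBli (subset_univ B)
  have hb_top : ⊤ ≤ span K (range fun x : b => v x) := by
    rw [← hw, ← image_eq_range]
    refine span_le.2 (hbspan.trans' ?_)
    rintro _ ⟨k, rfl⟩
    exact ⟨Sum.inr k, mem_univ _, rfl⟩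
  let e := (finBasisOfFinrankEq K V hm).indexEquiv (Basis.mk hbli hb_top)
  refine ⟨fun k => e k, hbli.comp e e.injective, fun i => ?_⟩
  refine span_mono ?_ (hBspan ⟨Sum.inl i, mem_range_self i, rfl⟩)
  rintro _ ⟨x, hxB, rfl⟩
  obtain ⟨i', rfl⟩ := hBinl hxB
  exact ⟨i', ⟨e.symm ⟨_, hBb hxB⟩, by simp⟩, rfl⟩

theorem exists_square_subsystem_det_ne_zero {ι : Type*} {m : ℕ} (r : ι → Fin m → ℤ) :
    ∃ f : Fin m → ι ⊕ Fin m,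
      (Matrix.of fun k => Sum.elim r (fun j => Pi.single j 1) (f k)).det ≠ 0 ∧
      ∀ i, (fun j => (r i j : ℝ)) ∈
        span ℝ ((fun i j => (r i j : ℝ)) '' {i' | Sum.inl i' ∈ range f}) := by
  have hR : (fun k j => (Sum.elim r (fun j => Pi.single j 1) k j : ℝ)) =
      Sum.elim (fun i j => (r i j : ℝ)) fun j => Pi.single j 1 := by
    ext (i | j) l
    · rfl
    · simp [Pi.single_apply, apply_ite (Int.cast : ℤ → ℝ)]
  have hsingle : span ℝ (range fun j : Fin m => (Pi.single j 1 : Fin m → ℝ)) = ⊤ := by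
    rw [← (Pi.basisFun ℝ (Fin m)).span_eq, ← funext (Pi.basisFun_apply ℝ (Fin m))]
  obtain ⟨f, hli, hspan⟩ := exists_linearIndependent_sumElim_comp (finrank_fin_fun ℝ)
    (fun i j => (r i j : ℝ)) _ hsingle
  refine ⟨f, ?_, hspan⟩
  rw [← hR] at hli
  have hM : IsUnit ((Matrix.of fun k => Sum.elim r (fun j => Pi.single j 1) (f k)).map
      ((↑) : ℤ → ℝ)) := linearIndependent_rows_iff_isUnit.1 hli
  rw [isUnit_iff_isUnit_det, ← Int.cast_det, isUnit_iff_ne_zero] at hM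
  exact_mod_cast hM

theorem exists_pos_int_mul_solution {ι : Type*} {m : ℕ} (r : ι → Fin m → ℤ) (c : ι → ℤ)
    (hr : ∀ i j, |r i j| ≤ 1) (hc : ∀ i, |c i| ≤ 1) (x : Fin m → ℝ)
    (hx : ∀ i, (fun j => (r i j : ℝ)) ⬝ᵥ x = c i) :
    ∃ d : ℤ, 0 < d ∧ ∃ y : Fin m → ℤ,
      (∀ j, |(y j : ℝ)| ≤ m * √m ^ m) ∧ ∀ i, r i ⬝ᵥ y = d * c i := by
  obtain ⟨f, hdet, hspan⟩ := exists_square_subsystem_det_ne_zero r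
  set M := Matrix.of fun k => Sum.elim r (fun j => Pi.single j 1) (f k)
  let y₀ := M.adjugate *ᵥ (Sum.elim c 0 ∘ f)
  have hMy : M *ᵥ y₀ = M.det • (Sum.elim c 0 ∘ f) := by
    rw [mulVec_mulVec, mul_adjugate, smul_mulVec, one_mulVec]
  have hsol : ∀ i, r i ⬝ᵥ y₀ = M.det * c i := by
    -- `z` is orthogonal to the chosen rows of `r`, hence to all rows of `r`
    let z : Fin m → ℝ := (fun j => (y₀ j : ℝ)) - (M.det : ℝ) • x
    have hz : ∀ i, (fun j => (r i j : ℝ)) ⬝ᵥ z = ((r i ⬝ᵥ y₀ : ℤ) : ℝ) - M.det * c i := by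
      intro i
      simp only [z, dotProduct_sub, dotProduct_smul, hx, smul_eq_mul, Int.cast_dotProduct]
    intro i
    have := dotProduct_eq_zero_of_mem_span (z := z) ?_ (hspan i)
    · rw [hz, sub_eq_zero] at this
      exact_mod_cast this
    rintro _ ⟨i', ⟨k, hk⟩, rfl⟩
    rw [hz, sub_eq_zero]
    exact_mod_cast by simpa [M, hk, mulVec] using congrFun hMy k
  refine ⟨|M.det|, abs_pos.2 hdet, M.det.sign • y₀, fun j => ?_, fun i => ?_⟩
  · have hR : ∀ k l, |Sum.elim r (fun j => Pi.single j 1) k l| ≤ 1 := by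
      rintro (i | j') l
      · exact hr i l
      · simp only [Sum.elim_inr, Pi.single_apply]
        split_ifs <;> simp
    have hc' : ∀ k : ι ⊕ Fin m, |Sum.elim c 0 k| ≤ 1 := by
      rintro (i | j')
      · exact hc i
      · simp
    rw [Pi.smul_apply, smul_eq_mul, Int.cast_mul, abs_mul, ← Int.cast_abs,
      Int.abs_sign_of_ne_zero hdet, Int.cast_one, one_mul]
    exact M.abs_adjugate_mulVec_le (fun k => hR (f k)) _ (fun k => hc' (f k)) j
  · rw [dotProduct_smul, hsol, smul_eq_mul, ← mul_assoc, Int.sign_mul_self_eq_abs]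

section Polyhedron

variable {𝕜 ι n : Type*} [Field 𝕜] [LinearOrder 𝕜] [IsStrictOrderedRing 𝕜] [Fintype n]

def polyhedron (a : ι → n → 𝕜) (b : ι → 𝕜) : Set (n → 𝕜) := {x | ∀ i, b i ≤ a i ⬝ᵥ x}

variable {a : ι → n → 𝕜} {b : ι → 𝕜}

theorem smul_mem_polyhedron {x : n → 𝕜} (hx : x ∈ polyhedron a b) (hb : ∀ i, 0 ≤ b i) {t : 𝕜}
    (ht : 1 ≤ t) : t • x ∈ polyhedron a b := fun i => by
  rw [dotProduct_smul, smul_eq_mul]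
  nlinarith [hx i, hb i]

theorem exists_mem_segment_mem_polyhedron_tight [Finite ι] {x₀ x : n → 𝕜}
    (hx₀ : x₀ ∈ polyhedron a b) (hx : x ∉ polyhedron a b) :
    ∃ z ∈ segment 𝕜 x₀ x, z ∈ polyhedron a b ∧ ∃ i, a i ⬝ᵥ x < b i ∧ a i ⬝ᵥ z = b i := by
  have := Fintype.ofFinite ι
  classical
  let viol : Finset ι := {i | a i ⬝ᵥ x < b i}
  have hviol : viol.Nonempty := by simpa [viol, polyhedron, Finset.filter_nonempty_iff] using hx
  have hgap : ∀ i ∈ viol, 0 < a i ⬝ᵥ x₀ - a i ⬝ᵥ x := fun i hi => by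
    have := (Finset.mem_filter.1 hi).2
    linarith [hx₀ i]
  -- the step along `x - x₀` at which the violated constraint `i` becomes tight
  let g i := (a i ⬝ᵥ x₀ - b i) / (a i ⬝ᵥ x₀ - a i ⬝ᵥ x)
  obtain ⟨i₁, hi₁, hmin⟩ := viol.exists_min_image g hviol
  have hdot : ∀ i, a i ⬝ᵥ (x₀ + g i₁ • (x - x₀)) = a i ⬝ᵥ x₀ - g i₁ * (a i ⬝ᵥ x₀ - a i ⬝ᵥ x) := by
    intro i
    simp only [dotProduct_add, dotProduct_smul, dotProduct_sub, smul_eq_mul]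
    ring
  have hg_mul : g i₁ * (a i₁ ⬝ᵥ x₀ - a i₁ ⬝ᵥ x) = a i₁ ⬝ᵥ x₀ - b i₁ :=
    div_mul_cancel₀ _ (hgap i₁ hi₁).ne'
  have hg_nonneg : 0 ≤ g i₁ := div_nonneg (sub_nonneg.2 (hx₀ i₁)) (hgap i₁ hi₁).le
  have hg_le_one : g i₁ ≤ 1 :=
    div_le_one_of_le₀ (by linarith [(Finset.mem_filter.1 hi₁).2]) (hgap i₁ hi₁).le
  refine ⟨x₀ + g i₁ • (x - x₀), ?_, fun i => ?_, i₁, (Finset.mem_filter.1 hi₁).2, ?_⟩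
  · rw [segment_eq_image']
    exact ⟨g i₁, ⟨hg_nonneg, hg_le_one⟩, rfl⟩
  · rw [hdot]
    by_cases hi : i ∈ viol
    · have := hmin i hi
      rw [le_div_iff₀ (hgap i hi)] at this
      linarith
    · have : b i ≤ a i ⬝ᵥ x := by simpa [viol] using hi
      nlinarith [hx₀ i]
  · rw [hdot, hg_mul]
    ring

theorem exists_mem_polyhedron_forall_tight_imp_mem [Finite ι] (hne : (polyhedron a b).Nonempty) :
    ∃ x₀ ∈ polyhedron a b,
      ∀ x, (∀ i, a i ⬝ᵥ x₀ = b i → a i ⬝ᵥ x = b i) → x ∈ polyhedron a b := by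
  have := Fintype.ofFinite ι
  classical
  let tight (x : n → 𝕜) : Finset ι := {i | a i ⬝ᵥ x = b i}
  obtain ⟨_, ⟨x₀, hx₀, rfl⟩, hmax⟩ :=
    (tight '' polyhedron a b).exists_max_image Finset.card (toFinite _) (hne.image tight)
  refine ⟨x₀, hx₀, fun x hx => by_contra fun hxP => ?_⟩
  obtain ⟨z, ⟨α, β, hα, hβ, hαβ, rfl⟩, hz, i, hix, hiz⟩ :=
    exists_mem_segment_mem_polyhedron_tight hx₀ hxP
  have hsub : insert i (tight x₀) ⊆ tight (α • x₀ + β • x) := by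
    refine Finset.insert_subset (by simpa [tight] using hiz) fun j hj => ?_
    have hj : a j ⬝ᵥ x₀ = b j := by simpa [tight] using hj
    simp only [tight, Finset.mem_filter, Finset.mem_univ, true_and, dotProduct_add,
      dotProduct_smul, smul_eq_mul, hj, hx j hj, ← add_mul, hαβ, one_mul]
  have hi : i ∉ tight x₀ := fun hi => hix.ne (hx i (by simpa [tight] using hi))
  have := (Finset.card_le_card hsub).trans (hmax _ (mem_image_of_mem tight hz))
  rw [Finset.card_insert_of_notMem hi] at this
  omega

end Polyhedron

section Threshold

variable {n : ℕ}

def subsetRow (s : Finset (Fin n)) : Fin (n + 1) → ℤ := Fin.snoc (fun i => if i ∈ s then 1 else 0) (-1)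

theorem subsetRow_dotProduct (s : Finset (Fin n)) (x : Fin (n + 1) → ℝ) :
    (fun j => (subsetRow s j : ℝ)) ⬝ᵥ x = ∑ i ∈ s, x i.castSucc - x (Fin.last n) := by
  simp [dotProduct, Fin.sum_univ_castSucc, subsetRow, apply_ite (Int.cast : ℤ → ℝ),
    Finset.sum_ite_mem, sub_eq_add_neg]

theorem abs_subsetRow_le_one (s : Finset (Fin n)) (j : Fin (n + 1)) : |subsetRow s j| ≤ 1 := by
  induction j using Fin.lastCases with
  | last => simp [subsetRow]
  | cast i => by_cases hi : i ∈ s <;> simp [subsetRow, hi]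

variable (w : Fin n → ℝ) (C : ℝ)

noncomputable def thresholdRow (s : Finset (Fin n)) : Fin (n + 1) → ℤ :=
  if ∑ i ∈ s, w i ≤ C then -subsetRow s else subsetRow s

noncomputable def thresholdRhs (s : Finset (Fin n)) : ℤ := if ∑ i ∈ s, w i ≤ C then 0 else 1

abbrev thresholdPolyhedron : Set (Fin (n + 1) → ℝ) :=
  polyhedron (fun s j => (thresholdRow w C s j : ℝ)) fun s => (thresholdRhs w C s : ℝ)

variable {w C}

theorem thresholdRow_dotProduct (s : Finset (Fin n)) (x : Fin (n + 1) → ℝ) :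
    (fun j => (thresholdRow w C s j : ℝ)) ⬝ᵥ x =
      if ∑ i ∈ s, w i ≤ C then x (Fin.last n) - ∑ i ∈ s, x i.castSucc
      else ∑ i ∈ s, x i.castSucc - x (Fin.last n) := by
  unfold thresholdRow
  split_ifs
  · rw [← neg_sub, ← subsetRow_dotProduct]
    simp only [Pi.neg_apply, Int.cast_neg]
    exact neg_dotProduct _ x
  · exact subsetRow_dotProduct s x

theorem mem_thresholdPolyhedron_iff {x : Fin (n + 1) → ℝ} :
    x ∈ thresholdPolyhedron w C ↔ ∀ s : Finset (Fin n),
      (∑ i ∈ s, w i ≤ C → ∑ i ∈ s, x i.castSucc ≤ x (Fin.last n)) ∧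
      (C < ∑ i ∈ s, w i → x (Fin.last n) + 1 ≤ ∑ i ∈ s, x i.castSucc) := by
  refine forall_congr' fun s => ?_
  by_cases hs : ∑ i ∈ s, w i ≤ C
  · simp [thresholdRow_dotProduct, thresholdRhs, hs]
  · simp [thresholdRow_dotProduct, thresholdRhs, hs, not_le.1 hs, le_sub_iff_add_le']

theorem thresholdPolyhedron_nonempty : (thresholdPolyhedron w C).Nonempty := by
  let gap s := if ∑ i ∈ s, w i ≤ C then 1 else ∑ i ∈ s, w i - C
  let δ := Finset.univ.inf' Finset.univ_nonempty gap
  have hδ : 0 < δ := (Finset.lt_inf'_iff _).2 fun s _ => by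
    by_cases hs : ∑ i ∈ s, w i ≤ C <;> simp [gap, hs]; linarith
  refine ⟨δ⁻¹ • Fin.snoc w C, mem_thresholdPolyhedron_iff.2 fun s => ⟨fun hs => ?_, fun hs => ?_⟩⟩
  · simp only [Pi.smul_apply, Fin.snoc_castSucc, Fin.snoc_last, smul_eq_mul,
      ← Finset.mul_sum]
    exact mul_le_mul_of_nonneg_left hs (inv_nonneg.2 hδ.le)
  · have : δ ≤ gap s := Finset.inf'_le _ (Finset.mem_univ s)
    simp only [gap, if_neg hs.not_ge] at this
    simp only [Pi.smul_apply, Fin.snoc_castSucc, Fin.snoc_last, smul_eq_mul, ← Finset.mul_sum]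
    calc δ⁻¹ * C + 1 ≤ δ⁻¹ * C + δ⁻¹ * (∑ i ∈ s, w i - C) := by
          gcongr
          rwa [le_inv_mul_iff₀ hδ, mul_one]
      _ = δ⁻¹ * ∑ i ∈ s, w i := by ring

theorem abs_thresholdRow_le_one (s : Finset (Fin n)) (j : Fin (n + 1)) :
    |thresholdRow w C s j| ≤ 1 := by
  unfold thresholdRow
  split_ifs <;> simp [abs_subsetRow_le_one]

end Threshold

theorem exists_int_threshold {n : ℕ} (w : Fin n → ℝ) (C : ℝ) :
    ∃ (w' : Fin n → ℤ) (C' : ℤ),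
      ∑ i, |(w' i : ℝ)| + |(C' : ℝ)| ≤ ((n : ℝ) + 1) ^ 2 * √((n : ℝ) + 1) ^ (n + 1) ∧
      ∀ s : Finset (Fin n), (∑ i ∈ s, w i ≤ C ↔ ∑ i ∈ s, (w' i : ℝ) ≤ C') := by
  have hrhs : ∀ s, 0 ≤ thresholdRhs w C s ∧ thresholdRhs w C s ≤ 1 := fun s => by
    unfold thresholdRhs
    split_ifs <;> norm_num
  obtain ⟨x₀, -, htight⟩ :=
    exists_mem_polyhedron_forall_tight_imp_mem (thresholdPolyhedron_nonempty (w := w) (C := C))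
  let T := {s // (fun j => (thresholdRow w C s j : ℝ)) ⬝ᵥ x₀ = thresholdRhs w C s}
  obtain ⟨d, hd, y, hy, hyx₀⟩ := exists_pos_int_mul_solution (fun s : T => thresholdRow w C s)
    (fun s => thresholdRhs w C s) (fun s => abs_thresholdRow_le_one s.1)
    (fun s => abs_le.2 ⟨by linarith [hrhs s], (hrhs s).2⟩) x₀ fun s => s.2
  have hyP : (fun j => (y j : ℝ)) ∈ thresholdPolyhedron w C := by
    have : (d : ℝ)⁻¹ • (fun j => (y j : ℝ)) ∈ thresholdPolyhedron w C := htight _ fun s hs => by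
      rw [dotProduct_smul, ← Int.cast_dotProduct, hyx₀ ⟨s, hs⟩, Int.cast_mul, smul_eq_mul,
        inv_mul_cancel_left₀ (by exact_mod_cast hd.ne')]
    have hd₁ : (1 : ℝ) ≤ d := by exact_mod_cast hd
    simpa [smul_smul, hd.ne'] using
      smul_mem_polyhedron this (fun s => by exact_mod_cast (hrhs s).1) hd₁
  refine ⟨fun i => y i.castSucc, y (Fin.last n), ?_, fun s => ?_⟩
  · rw [← Fin.sum_univ_castSucc fun j => |(y j : ℝ)|]
    calc ∑ j, |(y j : ℝ)| ≤ ∑ _j : Fin (n + 1), ((n + 1 : ℕ) : ℝ) * √(n + 1 : ℕ) ^ (n + 1) :=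
          Finset.sum_le_sum fun j _ => hy j
      _ = ((n : ℝ) + 1) ^ 2 * √((n : ℝ) + 1) ^ (n + 1) := by
          simp only [Finset.sum_const, Finset.card_univ, Fintype.card_fin, nsmul_eq_mul]
          push_cast
          ring
  · obtain ⟨hle, hlt⟩ := mem_thresholdPolyhedron_iff.1 hyP s
    refine ⟨hle, fun h => by_contra fun hs => ?_⟩
    linarith [hlt (not_le.1 hs)]

theorem knapsack_equivalent_instance (n : ℕ) (wts pr : Fin n → ℝ) (C T : ℝ) :
    ∃ (wts' pr' : Fin n → ℤ) (C' T' : ℤ),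
      ((∑ i, |(wts' i : ℝ)|) + (∑ i, |(pr' i : ℝ)|) + |(C' : ℝ)| + |(T' : ℝ)|
        ≤ 2 * ((n + 2 : ℝ) ^ 2 * (2 * Real.sqrt (n + 2)) ^ (n + 1))) ∧
      ∀ s : Finset (Fin n),
        ((∑ i ∈ s, wts i ≤ C ∧ T ≤ ∑ i ∈ s, pr i) ↔
         ((∑ i ∈ s, (wts' i : ℝ)) ≤ (C' : ℝ) ∧ (T' : ℝ) ≤ ∑ i ∈ s, (pr' i : ℝ))) := by
  obtain ⟨w₁, C₁, hw₁, hiff₁⟩ := exists_int_threshold wts C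
  obtain ⟨w₂, T₂, hw₂, hiff₂⟩ := exists_int_threshold (-pr) (-T)
  have hbound : ((n : ℝ) + 1) ^ 2 * √((n : ℝ) + 1) ^ (n + 1) ≤
      (n + 2 : ℝ) ^ 2 * (2 * √(n + 2)) ^ (n + 1) := by
    gcongr
    · linarith
    · calc √((n : ℝ) + 1) ≤ √(n + 2) := Real.sqrt_le_sqrt (by linarith)
        _ ≤ 2 * √(n + 2) := by linarith [Real.sqrt_nonneg ((n : ℝ) + 2)]
  refine ⟨w₁, -w₂, C₁, -T₂, ?_, fun s => and_congr (hiff₁ s) ?_⟩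
  · simp only [Pi.neg_apply, Int.cast_neg, abs_neg]
    linarith
  · simpa [Finset.sum_neg_distrib] using hiff₂ s
end

section
/- Let d, m ∈ N, let B ∈ Z^{s×(d+1)}, and let t ∈ N^s. Suppose x^1, …, x^m ∈ N^{d+1} satisfy B x^i = t for all i and ∑_i A x^i = n where A = (I_d | 0). If x^i − x^{i'} can be written as ∑_{j=1}^{2d} α_j g_j with α_j ∈ N, each g_j a sign-compatible kernel element of B (B g_j = 0, g_j ⊑ x^i − x^{i'}) with ‖g_j‖_∞ ≤ g_∞(B), then setting h := ∑_j ⌊α_j/2⌋ g_j, the vectors x̄^i := x^i − h and x̄^{i'} := x^{i'} + h are nonnegative, satisfy B x̄^i = B x̄^{i'} = t, preserve x̄^i + x̄^{i'} = x^i + x^{i'}, and satisfy ‖x̄^i − x̄^{i'}‖_∞ ≤ 2d·g_∞(B). -/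
theorem balancing_redistribution (d s : ℕ) (B : Matrix (Fin s) (Fin (d+1)) ℤ)
    (t : Fin s → ℤ) (G : ℤ)
    (x x' : Fin (d+1) → ℤ) (hx : ∀ k, 0 ≤ x k) (hx' : ∀ k, 0 ≤ x' k)
    (hBx : B.mulVec x = t) (hBx' : B.mulVec x' = t)
    (g : Fin (2*d) → Fin (d+1) → ℤ) (α : Fin (2*d) → ℕ)
    (hdecomp : ∀ k, x k - x' k = ∑ j, (α j : ℤ) * g j k)
    (hker : ∀ j, B.mulVec (g j) = 0)
    (hsign : ∀ j k, 0 ≤ g j k * (x k - x' k))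
    (hdom : ∀ j k, |g j k| ≤ |x k - x' k|)
    (hginf : ∀ j k, |g j k| ≤ G)
    (h : Fin (d+1) → ℤ) (hh : ∀ k, h k = ∑ j, ((α j / 2 : ℕ) : ℤ) * g j k) :
    (∀ k, 0 ≤ x k - h k) ∧ (∀ k, 0 ≤ x' k + h k) ∧
    B.mulVec (x - h) = t ∧ B.mulVec (x' + h) = t ∧
    (∀ k, (x k - h k) + (x' k + h k) = x k + x' k) ∧
    (∀ k, |(x k - h k) - (x' k + h k)| ≤ 2 * d * G) := by
  have key : ∀ k, (0 ≤ h k ∧ h k ≤ x k - x' k) ∨ (x k - x' k ≤ h k ∧ h k ≤ 0) := by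
    intro k
    rcases le_or_gt 0 (x k - x' k) with hd | hd
    · left
      have hg : ∀ j, 0 ≤ g j k := by
        intro j
        rcases hd.eq_or_lt with he | hp
        · have h1 := hdom j k
          rw [← he] at h1
          simp only [abs_zero, abs_nonpos_iff] at h1
          simp [h1]
        · nlinarith [hsign j k]
      constructor
      · rw [hh k]
        exact Finset.sum_nonneg fun j _ => mul_nonneg (Int.natCast_nonneg _) (hg j)
      · rw [hh k, hdecomp k]
        refine Finset.sum_le_sum fun j _ => mul_le_mul_of_nonneg_right ?_ (hg j)
        exact_mod_cast Nat.div_le_self (α j) 2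
    · right
      have hg : ∀ j, g j k ≤ 0 := fun j => by nlinarith [hsign j k]
      constructor
      · rw [hh k, hdecomp k]
        refine Finset.sum_le_sum fun j _ => mul_le_mul_of_nonpos_right ?_ (hg j)
        exact_mod_cast Nat.div_le_self (α j) 2
      · rw [hh k]
        exact Finset.sum_nonpos fun j _ => mul_nonpos_of_nonneg_of_nonpos (Int.natCast_nonneg _) (hg j)
  have hBh : B.mulVec h = 0 := by
    funext i
    simp only [Matrix.mulVec, dotProduct, Pi.zero_apply]
    calc ∑ k, B i k * h k
        = ∑ k, ∑ j, ((α j / 2 : ℕ) : ℤ) * (B i k * g j k) := by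
          refine Finset.sum_congr rfl fun k _ => ?_
          rw [hh k, Finset.mul_sum]
          exact Finset.sum_congr rfl fun j _ => by ring
      _ = ∑ j, ((α j / 2 : ℕ) : ℤ) * ∑ k, B i k * g j k := by
          rw [Finset.sum_comm]
          exact Finset.sum_congr rfl fun j _ => (Finset.mul_sum _ _ _).symm
      _ = 0 := by
          refine Finset.sum_eq_zero fun j _ => ?_
          have := congrFun (hker j) i
          simp only [Matrix.mulVec, dotProduct, Pi.zero_apply] at this
          rw [this, mul_zero]
  refine ⟨?_, ?_, ?_, ?_, fun k => by ring, ?_⟩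
  · intro k
    rcases key k with ⟨h1, h2⟩ | ⟨h1, h2⟩
    · have := hx' k; linarith
    · have := hx k; linarith
  · intro k
    rcases key k with ⟨h1, h2⟩ | ⟨h1, h2⟩
    · have := hx' k; linarith
    · have := hx k; linarith
  · rw [Matrix.mulVec_sub, hBx, hBh, sub_zero]
  · rw [Matrix.mulVec_add, hBx', hBh, add_zero]
  · intro k
    have e : (x k - h k) - (x' k + h k)
        = ∑ j, ((α j : ℤ) - 2 * ((α j / 2 : ℕ) : ℤ)) * g j k := by
      have e1 : (x k - h k) - (x' k + h k) = (x k - x' k) - 2 * h k := by ring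
      rw [e1, hdecomp k, hh k, Finset.mul_sum, ← Finset.sum_sub_distrib]
      exact Finset.sum_congr rfl fun j _ => by ring
    rw [e]
    calc |∑ j, ((α j : ℤ) - 2 * ((α j / 2 : ℕ) : ℤ)) * g j k|
        ≤ ∑ j, |((α j : ℤ) - 2 * ((α j / 2 : ℕ) : ℤ)) * g j k| :=
          Finset.abs_sum_le_sum_abs _ _
      _ ≤ ∑ _j : Fin (2*d), G := by
          refine Finset.sum_le_sum fun j _ => ?_
          have hG0 : 0 ≤ G := le_trans (abs_nonneg _) (hginf j k)
          have hc : |(α j : ℤ) - 2 * ((α j / 2 : ℕ) : ℤ)| ≤ 1 := by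
            rw [abs_le]; push_cast; omega
          rw [abs_mul]
          calc |(α j : ℤ) - 2 * ((α j / 2 : ℕ) : ℤ)| * |g j k|
              ≤ 1 * G := mul_le_mul hc (hginf j k) (abs_nonneg _) (by norm_num)
            _ = G := one_mul G
      _ = 2 * d * G := by
          rw [Finset.sum_const, Finset.card_univ, Fintype.card_fin]
          push_cast [nsmul_eq_mul]
          ring
end

section
/- Let B = (p_1, …, p_d, 1) ∈ Z^{1×(d+1)} be a single-row matrix with positive entries p_j ≤ p_max and last entry 1. Then every Graver basis element g of B satisfies ‖g‖_1 ≤ 2·p_max + 1, and in particular ‖g‖_∞ ≤ 2·p_max + 1. -/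
/-- `g` is sign-compatible with and componentwise dominated by `y`. -/
def SignCompat {n : ℕ} (g y : Fin n → ℤ) : Prop :=
  ∀ k, 0 ≤ g k * y k ∧ |g k| ≤ |y k|

/-- `g` is an element of the Graver basis of `B`: a ⊑-minimal nonzero integer
kernel element of `B`. -/
def InGraver {s n : ℕ} (B : Matrix (Fin s) (Fin n) ℤ) (g : Fin n → ℤ) : Prop :=
  g ≠ 0 ∧ B.mulVec g = 0 ∧
    ∀ g' : Fin n → ℤ, g' ≠ 0 → B.mulVec g' = 0 → SignCompat g' g → g' = g

open Finset

noncomputable def gstep {n : ℕ} (v : Fin n → ℤ) : Fin n → ℤ :=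
  if h : ∃ k, 0 < v k then fun k => v k - (if k = h.choose then 1 else 0) else v

lemma gstep_spec {n : ℕ} (v : Fin n → ℤ) (hv : ∀ k, 0 ≤ v k) (h : 0 < ∑ k, v k) :
    ∃ k0, 0 < v k0 ∧ gstep v = fun k => v k - (if k = k0 then 1 else 0) := by
  have hex : ∃ k, 0 < v k := by
    by_contra hc
    push_neg at hc
    have : ∑ k, v k = 0 := le_antisymm (Finset.sum_nonpos (fun k _ => hc k)) (Finset.sum_nonneg (fun k _ => hv k))
    omega
  exact ⟨hex.choose, hex.choose_spec, by rw [gstep, dif_pos hex]⟩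

lemma gstep_le {n : ℕ} (v : Fin n → ℤ) (k : Fin n) : gstep v k ≤ v k := by
  rw [gstep]
  split
  · simp only []
    split <;> omega
  · exact le_refl _

lemma gstep_nonneg {n : ℕ} (v : Fin n → ℤ) (hv : ∀ k, 0 ≤ v k) (k : Fin n) :
    0 ≤ gstep v k := by
  rw [gstep]
  split
  · rename_i h
    rcases eq_or_ne k h.choose with hk | hk
    · have := h.choose_spec
      simp only [hk, if_pos rfl]
      omega
    · simp only [if_neg hk]
      have := hv k
      omega
  · exact hv k

lemma gchain_nonneg {n : ℕ} (u : Fin n → ℤ) (hu : ∀ k, 0 ≤ u k) (s : ℕ) :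
    ∀ k, 0 ≤ gstep^[s] u k := by
  induction s with
  | zero => exact hu
  | succ s ih =>
    intro k
    rw [Function.iterate_succ_apply']
    exact gstep_nonneg _ ih k

lemma gchain_anti {n : ℕ} (u : Fin n → ℤ) {s s' : ℕ} (hs : s ≤ s') (k : Fin n) :
    gstep^[s'] u k ≤ gstep^[s] u k := by
  induction s' with
  | zero => simp_all
  | succ t ih =>
    rcases Nat.lt_or_ge s (t+1) with h | h
    · rw [Function.iterate_succ_apply']
      exact le_trans (gstep_le _ k) (ih (by omega))
    · have : s = t + 1 := le_antisymm hs h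
      subst this; exact le_refl _

lemma gchain_le_self {n : ℕ} (u : Fin n → ℤ) (s : ℕ) (k : Fin n) :
    gstep^[s] u k ≤ u k :=
  gchain_anti u (Nat.zero_le s) k

lemma gchain_sum {n : ℕ} (u : Fin n → ℤ) (hu : ∀ k, 0 ≤ u k) (s : ℕ)
    (hs : (s : ℤ) ≤ ∑ k, u k) :
    ∑ k, gstep^[s] u k = ∑ k, u k - s := by
  induction s with
  | zero => simp
  | succ s ih =>
    have hs' : (s : ℤ) ≤ ∑ k, u k := by push_cast at hs ⊢; omega
    have hsum : ∑ k, gstep^[s] u k = ∑ k, u k - s := ih hs'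
    have hpos : 0 < ∑ k, gstep^[s] u k := by rw [hsum]; push_cast at hs; omega
    obtain ⟨k0, _, hspec⟩ := gstep_spec _ (gchain_nonneg u hu s) hpos
    rw [Function.iterate_succ_apply', hspec]
    rw [Finset.sum_sub_distrib, hsum, Finset.sum_ite_eq' Finset.univ k0 (fun _ => (1:ℤ))]
    simp
    ring

lemma gchain_step {n : ℕ} (u : Fin n → ℤ) (hu : ∀ k, 0 ≤ u k) (s : ℕ)
    (hs : (s + 1 : ℤ) ≤ ∑ k, u k) :
    ∃ k0, gstep^[s+1] u = fun k => gstep^[s] u k - (if k = k0 then 1 else 0) := by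
  have hpos : 0 < ∑ k, gstep^[s] u k := by
    rw [gchain_sum u hu s (by omega)]; omega
  obtain ⟨k0, _, hspec⟩ := gstep_spec _ (gchain_nonneg u hu s) hpos
  exact ⟨k0, by rw [Function.iterate_succ_apply', hspec]⟩

noncomputable def Afam {n : ℕ} (b w : Fin n → ℤ) (t : ℕ) : ℤ :=
  ∑ k, b k * (gstep^[(∑ k, w k).toNat - t] w) k

lemma Afam_zero {n : ℕ} (b w : Fin n → ℤ) (hw : ∀ k, 0 ≤ w k) : Afam b w 0 = 0 := by
  set m := (∑ k, w k).toNat with hm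
  have hmz : (m : ℤ) = ∑ k, w k := Int.toNat_of_nonneg (Finset.sum_nonneg fun k _ => hw k)
  have hsum : ∑ k, gstep^[m] w k = 0 := by
    rw [gchain_sum w hw m (by omega)]; omega
  have hz : ∀ k ∈ Finset.univ, gstep^[m] w k = 0 :=
    (Finset.sum_eq_zero_iff_of_nonneg (fun k _ => gchain_nonneg w hw m k)).mp hsum
  rw [Afam]
  apply Finset.sum_eq_zero
  intro k hk
  rw [Nat.sub_zero, ← hm, hz k hk, mul_zero]

lemma Afam_top {n : ℕ} (b w : Fin n → ℤ) :
    Afam b w ((∑ k, w k).toNat) = ∑ k, b k * w k := by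
  rw [Afam, Nat.sub_self]
  simp

lemma Afam_succ {n : ℕ} (b w : Fin n → ℤ) (pmax : ℤ) (hw : ∀ k, 0 ≤ w k)
    (hb1 : ∀ k, 1 ≤ b k) (hb2 : ∀ k, b k ≤ pmax) (t : ℕ) (ht : t < (∑ k, w k).toNat) :
    Afam b w t + 1 ≤ Afam b w (t + 1) ∧ Afam b w (t + 1) ≤ Afam b w t + pmax := by
  set m := (∑ k, w k).toNat with hm
  have hmz : (m : ℤ) = ∑ k, w k := Int.toNat_of_nonneg (Finset.sum_nonneg fun k _ => hw k)
  have h1 : m - t = (m - (t+1)) + 1 := by omega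
  obtain ⟨k0, hk0⟩ := gchain_step w hw (m - (t+1)) (by omega)
  have hA : Afam b w t = Afam b w (t+1) - b k0 := by
    rw [Afam, Afam, ← hm, h1, hk0]
    have : ∀ k, b k * (gstep^[m - (t+1)] w k - (if k = k0 then 1 else 0))
        = b k * gstep^[m - (t+1)] w k - (if k = k0 then b k else 0) := by
      intro k; split <;> ring
    rw [Finset.sum_congr rfl (fun k _ => this k), Finset.sum_sub_distrib,
      Finset.sum_ite_eq' Finset.univ k0 b]
    simp
  have := hb1 k0
  have := hb2 k0
  constructor <;> omega

lemma Afam_mono {n : ℕ} (b w : Fin n → ℤ) (pmax : ℤ) (hw : ∀ k, 0 ≤ w k)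
    (hb1 : ∀ k, 1 ≤ b k) (hb2 : ∀ k, b k ≤ pmax) :
    ∀ j, j ≤ (∑ k, w k).toNat → ∀ i, i ≤ j → Afam b w i + (j - i : ℕ) ≤ Afam b w j := by
  intro j
  induction j with
  | zero => intro _ i hi; interval_cases i; simp
  | succ t ih =>
    intro hj i hi
    rcases Nat.lt_or_ge i (t+1) with h | h
    · have h1 := ih (by omega) i (by omega)
      have h2 := (Afam_succ b w pmax hw hb1 hb2 t (by omega)).1
      have : ((t + 1 - i : ℕ) : ℤ) = ((t - i : ℕ) : ℤ) + 1 := by omega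
      omega
    · have : i = t + 1 := by omega
      subst this; simp

lemma exists_balanced {n : ℕ} (b u v : Fin n → ℤ) (pmax : ℤ) (hpm : 1 ≤ pmax)
    (hb1 : ∀ k, 1 ≤ b k) (hb2 : ∀ k, b k ≤ pmax)
    (hu : ∀ k, 0 ≤ u k) (hv : ∀ k, 0 ≤ v k)
    (hsum : ∑ k, b k * u k = ∑ k, b k * v k)
    (hbig : pmax + 1 ≤ ∑ k, u k) :
    ∃ x y : Fin n → ℤ, (∀ k, 0 ≤ x k) ∧ (∀ k, x k ≤ u k) ∧ (∀ k, 0 ≤ y k) ∧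
      (∀ k, y k ≤ v k) ∧ (∑ k, b k * x k = ∑ k, b k * y k) ∧ x ≠ 0 ∧ x ≠ u := by
  classical
  obtain ⟨m, hmz⟩ : ∃ m : ℕ, (m : ℤ) = ∑ k, u k :=
    ⟨_, Int.toNat_of_nonneg (Finset.sum_nonneg fun k _ => hu k)⟩
  obtain ⟨l, hlz⟩ : ∃ l : ℕ, (l : ℤ) = ∑ k, v k :=
    ⟨_, Int.toNat_of_nonneg (Finset.sum_nonneg fun k _ => hv k)⟩
  have hmt : (∑ k, u k).toNat = m := by omega
  have hlt' : (∑ k, v k).toNat = l := by omega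
  have hA0 : Afam b u 0 = 0 := Afam_zero b u hu
  have hB0 : Afam b v 0 = 0 := Afam_zero b v hv
  have hAm : Afam b u m = ∑ k, b k * u k := by rw [← hmt]; exact Afam_top b u
  have hBl : Afam b v l = ∑ k, b k * v k := by rw [← hlt']; exact Afam_top b v
  have hAmono : ∀ j, j ≤ m → ∀ i, i ≤ j → Afam b u i + (j - i : ℕ) ≤ Afam b u j := by
    intro j hj
    exact Afam_mono b u pmax hu hb1 hb2 j (by rw [hmt]; exact hj)
  have hBmono : ∀ j, j ≤ l → ∀ i, i ≤ j → Afam b v i + (j - i : ℕ) ≤ Afam b v j := by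
    intro j hj
    exact Afam_mono b v pmax hv hb1 hb2 j (by rw [hlt']; exact hj)
  have hAnn : ∀ i, i ≤ m → 0 ≤ Afam b u i := by
    intro i hi
    have := hAmono i hi 0 (Nat.zero_le _)
    omega
  set jf : ℕ → ℕ := fun i => Nat.findGreatest (fun j => Afam b v j ≤ Afam b u i) l with hjf
  have hjle : ∀ i, jf i ≤ l := fun i => Nat.findGreatest_le l
  have hjspec : ∀ i, i ≤ m → Afam b v (jf i) ≤ Afam b u i := by
    intro i hi
    exact Nat.findGreatest_spec (P := fun j => Afam b v j ≤ Afam b u i) (Nat.zero_le l)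
      (by show Afam b v 0 ≤ Afam b u i; rw [hB0]; exact hAnn i hi)
  have hrub : ∀ i, i < m → Afam b u i - Afam b v (jf i) ≤ pmax - 1 := by
    intro i hi
    have hjlt : jf i < l := by
      rcases Nat.lt_or_ge (jf i) l with h | h
      · exact h
      · exfalso
        have hje : jf i = l := le_antisymm (hjle i) h
        have h1 := hjspec i (le_of_lt hi)
        have h2 := hAmono m (le_refl m) i (le_of_lt hi)
        have h3 : (1 : ℤ) ≤ ((m - i : ℕ) : ℤ) := by omega
        rw [hje, hBl, ← hsum, ← hAm] at h1
        omega
    have hng : ¬ (Afam b v (jf i + 1) ≤ Afam b u i) :=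
      Nat.findGreatest_is_greatest (Nat.lt_succ_self _) hjlt
    have hstep := (Afam_succ b v pmax hv hb1 hb2 (jf i) (by rw [hlt']; exact hjlt)).2
    omega
  have hrlb : ∀ i, i ≤ m → 0 ≤ Afam b u i - Afam b v (jf i) := by
    intro i hi
    have := hjspec i hi
    omega
  have hcard : (Finset.Icc (0:ℤ) (pmax - 1)).card < (Finset.range m).card := by
    rw [Int.card_Icc, Finset.card_range]
    omega
  have hmaps : ∀ i ∈ Finset.range m,
      Afam b u i - Afam b v (jf i) ∈ Finset.Icc (0:ℤ) (pmax - 1) := by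
    intro i hi
    rw [Finset.mem_range] at hi
    rw [Finset.mem_Icc]
    exact ⟨hrlb i (le_of_lt hi), hrub i hi⟩
  obtain ⟨i1, hi1, i2, hi2, hne, heq⟩ :=
    Finset.exists_ne_map_eq_of_card_lt_of_maps_to hcard hmaps
  rw [Finset.mem_range] at hi1 hi2
  obtain ⟨i, i', hii, hilt, hilt', hreq⟩ :
      ∃ i i', i < i' ∧ i < m ∧ i' < m ∧
        Afam b u i - Afam b v (jf i) = Afam b u i' - Afam b v (jf i') := by
    rcases lt_or_gt_of_ne hne with h | h
    · exact ⟨i1, i2, h, hi1, hi2, heq⟩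
    · exact ⟨i2, i1, h, hi2, hi1, heq.symm⟩
  have hAlt : Afam b u i + 1 ≤ Afam b u i' := by
    have h1 := hAmono i' (le_of_lt hilt') i (le_of_lt hii)
    have h2 : (1 : ℤ) ≤ ((i' - i : ℕ) : ℤ) := by omega
    omega
  have hjj : jf i < jf i' := by
    rcases Nat.lt_or_ge (jf i) (jf i') with h | h
    · exact h
    · exfalso
      have := hBmono (jf i) (hjle i) (jf i') h
      have h2 : (0 : ℤ) ≤ ((jf i - jf i' : ℕ) : ℤ) := by omega
      omega
  have hAfamu : ∀ t, Afam b u t = ∑ k, b k * gstep^[m - t] u k := by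
    intro t; rw [Afam, hmt]
  have hAfamv : ∀ t, Afam b v t = ∑ k, b k * gstep^[l - t] v k := by
    intro t; rw [Afam, hlt']
  have hxsum : ∑ k, b k * (gstep^[m - i'] u k - gstep^[m - i] u k)
      = Afam b u i' - Afam b u i := by
    rw [Finset.sum_congr rfl (fun k _ => mul_sub (b k) _ _), Finset.sum_sub_distrib,
      hAfamu i', hAfamu i]
  have hysum : ∑ k, b k * (gstep^[l - jf i'] v k - gstep^[l - jf i] v k)
      = Afam b v (jf i') - Afam b v (jf i) := by
    rw [Finset.sum_congr rfl (fun k _ => mul_sub (b k) _ _), Finset.sum_sub_distrib,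
      hAfamv (jf i'), hAfamv (jf i)]
  refine ⟨fun k => gstep^[m - i'] u k - gstep^[m - i] u k,
          fun k => gstep^[l - jf i'] v k - gstep^[l - jf i] v k, ?_, ?_, ?_, ?_, ?_, ?_, ?_⟩
  · intro k
    show 0 ≤ gstep^[m - i'] u k - gstep^[m - i] u k
    have := gchain_anti u (show m - i' ≤ m - i by omega) k
    omega
  · intro k
    show gstep^[m - i'] u k - gstep^[m - i] u k ≤ u k
    have h1 := gchain_le_self u (m - i') k
    have h2 := gchain_nonneg u hu (m - i) k
    omega
  · intro k
    show 0 ≤ gstep^[l - jf i'] v k - gstep^[l - jf i] v k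
    have := gchain_anti v (show l - jf i' ≤ l - jf i by omega) k
    omega
  · intro k
    show gstep^[l - jf i'] v k - gstep^[l - jf i] v k ≤ v k
    have h1 := gchain_le_self v (l - jf i') k
    have h2 := gchain_nonneg v hv (l - jf i) k
    omega
  · rw [hxsum, hysum]
    omega
  · intro h
    have hz : ∀ k, gstep^[m - i'] u k - gstep^[m - i] u k = 0 := fun k => congrFun h k
    have : Afam b u i' - Afam b u i = 0 := by
      rw [← hxsum]
      apply Finset.sum_eq_zero
      intro k _
      rw [hz k, mul_zero]
    omega
  · intro h
    have hz : ∀ k, gstep^[m - i'] u k - gstep^[m - i] u k = u k := fun k => congrFun h k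
    have hsx : ∑ k, (gstep^[m - i'] u k - gstep^[m - i] u k) = (i' : ℤ) - i := by
      rw [Finset.sum_sub_distrib, gchain_sum u hu (m - i') (by omega),
        gchain_sum u hu (m - i) (by omega)]
      omega
    have h2 : ∑ k, (gstep^[m - i'] u k - gstep^[m - i] u k) = ∑ k, u k :=
      Finset.sum_congr rfl (fun k _ => hz k)
    rw [h2, ← hmz] at hsx
    omega

lemma pos_part_bound {n : ℕ} (b : Fin n → ℤ) (pmax : ℤ) (hpm : 1 ≤ pmax)
    (hb1 : ∀ k, 1 ≤ b k) (hb2 : ∀ k, b k ≤ pmax)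
    (g : Fin n → ℤ) (hker : ∑ k, b k * g k = 0)
    (hmin : ∀ g' : Fin n → ℤ, g' ≠ 0 → (∑ k, b k * g' k = 0) → SignCompat g' g → g' = g) :
    ∑ k, max (g k) 0 ≤ pmax := by
  by_contra hc
  push_neg at hc
  have hu : ∀ k, (0:ℤ) ≤ max (g k) 0 := fun k => le_max_right _ _
  have hv : ∀ k, (0:ℤ) ≤ max (-(g k)) 0 := fun k => le_max_right _ _
  have hsum : ∑ k, b k * max (g k) 0 = ∑ k, b k * max (-(g k)) 0 := by
    have hterm : ∀ k, b k * max (g k) 0 - b k * max (-(g k)) 0 = b k * g k := by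
      intro k
      rw [← mul_sub]
      congr 1
      omega
    have h1 : ∑ k, (b k * max (g k) 0 - b k * max (-(g k)) 0) = 0 := by
      rw [Finset.sum_congr rfl (fun k _ => hterm k)]
      exact hker
    rw [Finset.sum_sub_distrib] at h1
    omega
  have hbig : pmax + 1 ≤ ∑ k, max (g k) 0 := by omega
  obtain ⟨x, y, hx0, hxu, hy0, hyv, hxy, hxne, hxneu⟩ :=
    exists_balanced b (fun k => max (g k) 0) (fun k => max (-(g k)) 0) pmax hpm hb1 hb2
      hu hv hsum hbig
  have hxu' : ∀ k, x k ≤ max (g k) 0 := hxu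
  have hyv' : ∀ k, y k ≤ max (-(g k)) 0 := hyv
  have hsc : SignCompat (fun k => x k - y k) g := by
    intro k
    rcases le_or_gt (g k) 0 with h | h
    · have hx0k : x k = 0 := by have := hxu' k; have := hx0 k; omega
      have hyk : y k ≤ -(g k) := by have := hyv' k; omega
      constructor
      · show 0 ≤ (x k - y k) * g k
        have : (x k - y k) * g k = y k * (-(g k)) := by rw [hx0k]; ring
        rw [this]
        exact mul_nonneg (hy0 k) (by omega)
      · show |x k - y k| ≤ |g k|
        rw [abs_of_nonpos (by have := hy0 k; omega), abs_of_nonpos h]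
        omega
    · have hyk : y k = 0 := by have := hyv' k; have := hy0 k; omega
      have hxk : x k ≤ g k := by have := hxu' k; omega
      constructor
      · show 0 ≤ (x k - y k) * g k
        rw [hyk, sub_zero]
        exact mul_nonneg (hx0 k) (by omega)
      · show |x k - y k| ≤ |g k|
        rw [abs_of_nonneg (by have := hx0 k; omega), abs_of_pos h]
        omega
  have hker' : ∑ k, b k * (x k - y k) = 0 := by
    rw [Finset.sum_congr rfl (fun k (_ : k ∈ Finset.univ) => mul_sub (b k) (x k) (y k)),
      Finset.sum_sub_distrib, hxy]
    ring
  have hne : (fun k => x k - y k) ≠ 0 := by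
    intro h
    apply hxne
    funext k
    have hzk : x k - y k = 0 := congrFun h k
    show x k = 0
    rcases le_or_gt (g k) 0 with hgk | hgk
    · have := hxu' k; have := hx0 k; omega
    · have := hyv' k; have := hy0 k; omega
  have heq := hmin _ hne hker' hsc
  apply hxneu
  funext k
  have hk : x k - y k = g k := congrFun heq k
  show x k = max (g k) 0
  rcases le_or_gt (g k) 0 with hgk | hgk
  · have := hxu' k; have := hx0 k; omega
  · have := hyv' k; have := hy0 k; omega

theorem graver_bound_single_row (d : ℕ) (p : Fin d → ℤ) (pmax : ℤ)
    (hp : ∀ j, 0 < p j) (hpmax : ∀ j, p j ≤ pmax)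
    (B : Matrix (Fin 1) (Fin (d+1)) ℤ)
    (hB : ∀ k : Fin (d+1), B 0 k = (Fin.snoc p (1 : ℤ) : Fin (d+1) → ℤ) k)
    (g : Fin (d+1) → ℤ) (hg : InGraver B g) :
    (∑ k, |g k|) ≤ 2 * pmax + 1 ∧ ∀ k, |g k| ≤ 2 * pmax + 1 := by
  obtain ⟨hgne, hgker, hgmin⟩ := hg
  have hkersum : ∑ k, B 0 k * g k = 0 := by
    have := congrFun hgker 0
    simpa [Matrix.mulVec, dotProduct] using this
  have hmulvec : ∀ w : Fin (d+1) → ℤ, (∑ k, B 0 k * w k = 0) → B.mulVec w = 0 := by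
    intro w hw
    funext i
    have hi : i = 0 := Subsingleton.elim i 0
    subst hi
    simpa [Matrix.mulVec, dotProduct] using hw
  rcases Nat.eq_zero_or_pos d with hd | hd
  · exfalso
    apply hgne
    subst hd
    have h00 : B 0 0 = 1 := by
      rw [hB 0, show (0 : Fin 1) = Fin.last 0 from rfl, Fin.snoc_last]
    rw [Fin.sum_univ_one, h00, one_mul] at hkersum
    funext k
    have hk : k = 0 := Subsingleton.elim (α := Fin 1) k 0
    rw [hk]
    exact hkersum
  have hpm : (1:ℤ) ≤ pmax := by
    have h1 := hp ⟨0, hd⟩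
    have h2 := hpmax ⟨0, hd⟩
    omega
  have hb1 : ∀ k, 1 ≤ B 0 k := by
    intro k
    rw [hB k]
    rcases Fin.eq_castSucc_or_eq_last k with ⟨j, rfl⟩ | rfl
    · rw [Fin.snoc_castSucc]
      have := hp j
      omega
    · rw [Fin.snoc_last]
  have hb2 : ∀ k, B 0 k ≤ pmax := by
    intro k
    rw [hB k]
    rcases Fin.eq_castSucc_or_eq_last k with ⟨j, rfl⟩ | rfl
    · rw [Fin.snoc_castSucc]
      exact hpmax j
    · rw [Fin.snoc_last]
      exact hpm
  have hpos : ∑ k, max (g k) 0 ≤ pmax := by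
    apply pos_part_bound (fun k => B 0 k) pmax hpm hb1 hb2 g hkersum
    intro g' h1 h2 h3
    exact hgmin g' h1 (hmulvec g' h2) h3
  have hneg : ∑ k, max (-(g k)) 0 ≤ pmax := by
    apply pos_part_bound (fun k => B 0 k) pmax hpm hb1 hb2 (fun k => -(g k))
    · simp only [mul_neg]
      rw [Finset.sum_neg_distrib, hkersum, neg_zero]
    · intro g' h1 h2 h3
      have h3' : SignCompat (fun k => -(g' k)) g := by
        intro k
        obtain ⟨ha, hbk⟩ := h3 k
        have ha' : 0 ≤ g' k * (-(g k)) := ha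
        have hbk' : |g' k| ≤ |(-(g k))| := hbk
        constructor
        · show 0 ≤ -(g' k) * g k
          have h4 : -(g' k) * g k = g' k * (-(g k)) := by ring
          rw [h4]
          exact ha'
        · show |(-(g' k))| ≤ |g k|
          rw [abs_neg]
          rwa [abs_neg] at hbk'
      have hne2 : (fun k => -(g' k)) ≠ 0 := by
        intro h
        apply h1
        funext k
        have := congrFun h k
        simpa using this
      have hker2 : B.mulVec (fun k => -(g' k)) = 0 := by
        apply hmulvec
        simp only [mul_neg]
        rw [Finset.sum_neg_distrib, h2, neg_zero]
      have hgeq := hgmin _ hne2 hker2 h3'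
      funext k
      have hk : -(g' k) = g k := congrFun hgeq k
      show g' k = -(g k)
      omega
  have habs : ∀ k, |g k| = max (g k) 0 + max (-(g k)) 0 := by
    intro k
    rcases le_or_gt (g k) 0 with h | h
    · rw [abs_of_nonpos h]; omega
    · rw [abs_of_pos h]; omega
  have hsum_abs : (∑ k, |g k|) ≤ 2 * pmax + 1 := by
    rw [Finset.sum_congr rfl (fun k _ => habs k), Finset.sum_add_distrib]
    omega
  refine ⟨hsum_abs, fun k => ?_⟩
  have h1 : |g k| ≤ ∑ k, |g k| :=
    Finset.single_le_sum (f := fun k => |g k|) (fun i _ => abs_nonneg _) (Finset.mem_univ k)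
  omega
end

section
/- Suppose x* ∈ R^N_{≥0} is a solution of Ax = b (A ∈ Z^{M×N}, Δ = ‖A‖_∞) and z* ∈ N^N is a feasible integral solution with ‖x* − z*‖_1 ≤ M(2MΔ+1)^M. Define the pre-assignment q ∈ N^N by q_i := max{0, ⌈x*_i − M(2MΔ+1)^M⌉} and set b' := b − Aq. Then z* − q ∈ N^N is a feasible solution of Ax' = b' with 0 ≤ (z* − q)_i ≤ 2M(2MΔ+1)^M for all i, and ‖b'‖_∞ ≤ 2NΔ·M(2MΔ+1)^M. -/
theorem ilp_kernel_preassignment (M N : ℕ) (A : Matrix (Fin M) (Fin N) ℤ)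
    (b : Fin M → ℤ) (Δ : ℕ) (hΔ : ∀ i j, |A i j| ≤ (Δ : ℤ))
    (P : ℤ) (hPdef : P = (M : ℤ) * (2 * M * Δ + 1) ^ M)
    (xstar : Fin N → ℝ) (hxnn : ∀ i, 0 ≤ xstar i)
    (hxfeas : (A.map (Int.cast : ℤ → ℝ)).mulVec xstar = fun i => (b i : ℝ))
    (zstar : Fin N → ℤ) (hznn : ∀ i, 0 ≤ zstar i) (hzfeas : A.mulVec zstar = b)
    (hprox : (∑ i, |xstar i - (zstar i : ℝ)|) ≤ (P : ℝ))
    (q : Fin N → ℤ) (hq : ∀ i, q i = max 0 ⌈xstar i - (P : ℝ)⌉) :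
    (∀ i, 0 ≤ zstar i - q i ∧ zstar i - q i ≤ 2 * P) ∧
    A.mulVec (zstar - q) = b - A.mulVec q ∧
    (∀ i, |(b - A.mulVec q) i| ≤ 2 * N * Δ * P) := by
  have hkey : ∀ i, |xstar i - (zstar i : ℝ)| ≤ (P : ℝ) := by
    intro i
    calc |xstar i - (zstar i : ℝ)| ≤ ∑ j, |xstar j - (zstar j : ℝ)| :=
          Finset.single_le_sum (f := fun j => |xstar j - (zstar j : ℝ)|) (fun j _ => abs_nonneg _) (Finset.mem_univ i)
      _ ≤ (P : ℝ) := hprox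
  have hbounds : ∀ i, 0 ≤ zstar i - q i ∧ zstar i - q i ≤ 2 * P := by
    intro i
    have h := abs_le.mp (hkey i)
    have h1 : xstar i - (P : ℝ) ≤ (zstar i : ℝ) := by linarith [h.1]
    have h2 : (zstar i : ℝ) ≤ xstar i + (P : ℝ) := by linarith [h.2]
    rcases le_or_gt (⌈xstar i - (P : ℝ)⌉) 0 with hle | hlt
    · have hqz : q i = 0 := by rw [hq i, max_eq_left hle]
      have hxP : xstar i ≤ (P : ℝ) := by
        have hc : xstar i - (P : ℝ) ≤ ((⌈xstar i - (P : ℝ)⌉ : ℤ) : ℝ) := Int.le_ceil _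
        have hc0 : ((⌈xstar i - (P : ℝ)⌉ : ℤ) : ℝ) ≤ 0 := by exact_mod_cast hle
        linarith
      have hz2 : (zstar i : ℝ) ≤ ((2 * P : ℤ) : ℝ) := by push_cast; linarith
      exact ⟨by simpa [hqz] using hznn i, by rw [hqz]; simpa using (by exact_mod_cast hz2 : zstar i ≤ 2 * P)⟩
    · have hqc : q i = ⌈xstar i - (P : ℝ)⌉ := by rw [hq i, max_eq_right hlt.le]
      have hcz : ⌈xstar i - (P : ℝ)⌉ ≤ zstar i := Int.ceil_le.mpr (by push_cast; linarith)
      have hlo : xstar i - (P : ℝ) ≤ ((⌈xstar i - (P : ℝ)⌉ : ℤ) : ℝ) := Int.le_ceil _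
      have hub : (zstar i : ℝ) - ((⌈xstar i - (P : ℝ)⌉ : ℤ) : ℝ) ≤ ((2 * P : ℤ) : ℝ) := by
        push_cast; push_cast at hlo; linarith
      have : zstar i - ⌈xstar i - (P : ℝ)⌉ ≤ 2 * P := by exact_mod_cast (by push_cast; push_cast at hub; linarith : ((zstar i - ⌈xstar i - (P:ℝ)⌉ : ℤ) : ℝ) ≤ ((2 * P : ℤ) : ℝ))
      exact ⟨by rw [hqc]; omega, by rw [hqc]; exact this⟩
  have hfeas : A.mulVec (zstar - q) = b - A.mulVec q := by
    rw [Matrix.mulVec_sub, hzfeas]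
  refine ⟨hbounds, hfeas, ?_⟩
  intro i
  have : (b - A.mulVec q) i = ∑ j, A i j * (zstar j - q j) := by
    rw [← hfeas]; rfl
  rw [this]
  calc |∑ j, A i j * (zstar j - q j)| ≤ ∑ j, |A i j * (zstar j - q j)| :=
        Finset.abs_sum_le_sum_abs _ _
    _ ≤ ∑ j : Fin N, (Δ : ℤ) * (2 * P) := by
        refine Finset.sum_le_sum fun j _ => ?_
        rw [abs_mul]
        have h1 := hΔ i j
        have h2 : |zstar j - q j| ≤ 2 * P := by
          have := hbounds j; rw [abs_of_nonneg this.1]; exact this.2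
        exact mul_le_mul h1 h2 (abs_nonneg _) (by positivity)
    _ = 2 * N * Δ * P := by
        rw [Finset.sum_const, Finset.card_univ, Fintype.card_fin]; ring
end
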